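/- arXiv:1306.6562 — 2 statements merged into one kernel-verified Lean document; each statement's English description precedes it below -/
import Mathlib

section
/- The coheir relation satisfies transitivity: if A ⫝_{M0'} N and M0' ⫝_{M0} N with M0 ≺ M0' ≺ N, then A ⫝_{M0} N. -/
universe u

open Cardinal

/-- An abstract elementary class presented inside a monster model `C`, with
amalgamation, joint embedding and no maximal models (so that a monster model
exists).  Models are certain subsets of `C`, `prec` is the `≺_K` relation, and
`Aut` is the automorphism group of the monster model. -/
structure AEC (C : Type u) where
  IsModel : Set C → Prop
  prec : Set C → Set C → Prop
  Aut : Subgroup (Equiv.Perm C)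
  LS : Cardinal.{u}
  prec_refl : ∀ {M : Set C}, IsModel M → prec M M
  prec_trans : ∀ {M N P : Set C}, prec M N → prec N P → prec M P
  prec_isModel_left : ∀ {M N : Set C}, prec M N → IsModel M
  prec_isModel_right : ∀ {M N : Set C}, prec M N → IsModel N
  prec_subset : ∀ {M N : Set C}, prec M N → M ⊆ N
  coherence : ∀ {M N P : Set C}, prec M P → prec N P → M ⊆ N → prec M N
  aut_prec : ∀ f ∈ Aut, ∀ {M N : Set C}, prec M N → prec (f '' M) (f '' N)
  lowenheimSkolem : ∀ {N : Set C} (A : Set C), IsModel N → A ⊆ N →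
    ∃ N' : Set C, prec N' N ∧ A ⊆ N' ∧ #N' ≤ #A + LS
  unionChain : ∀ {ι : Type u} [inst : LinearOrder ι] (M : ι → Set C),
    (∀ i j, i ≤ j → prec (M i) (M j)) →
    ∀ N : Set C, (∀ i, prec (M i) N) → prec (⋃ j, M j) N

namespace AEC

variable {C : Type u} (K : AEC C)

/-- `f` fixes the set `M` pointwise. -/
def fixes (f : Equiv.Perm C) (M : Set C) : Prop := ∀ x ∈ M, f x = x

/-- Equality of Galois types over `M` of two `ι`-indexed tuples: some
automorphism of the monster model fixing `M` pointwise maps one to the other. -/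
def tpEq {ι : Type u} (a b : ι → C) (M : Set C) : Prop :=
  ∃ f ∈ K.Aut, fixes f M ∧ ∀ i, f (a i) = b i

/-- Coheir non-forking: `A ⫝_{M0} N` iff `M0 ≺ N` and for every subset `a ⊆ A`
of size `< κ` and every `N⁻ ≺ N` of size `< κ`, the Galois type of `a` over
`N⁻` is realized in `M0` (witnessed by an automorphism fixing `N⁻` that moves
`a` into `M0`). -/
def NF (κ : Cardinal.{u}) (A M0 N : Set C) : Prop :=
  K.prec M0 N ∧
  ∀ a : Set C, a ⊆ A → #a < κ →
  ∀ N' : Set C, K.prec N' N → #N' < κ →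
  ∃ f ∈ K.Aut, fixes f N' ∧ ∀ x ∈ a, f x ∈ M0

theorem fixes.mul {f g : Equiv.Perm C} {M : Set C} (hf : fixes f M) (hg : fixes g M) :
    fixes (g * f) M := fun x hx => by
  rw [Equiv.Perm.mul_apply, hf x hx, hg x hx]

theorem nf_transitivity (κ : Cardinal.{u}) (A M0 M0' N : Set C)
    (h1 : K.NF κ A M0' N) (h2 : K.NF κ M0' M0 N) :
    K.NF κ A M0 N := by
  obtain ⟨-, hA⟩ := h1
  obtain ⟨hM0N, hM0'⟩ := h2
  refine ⟨hM0N, fun a haA ha N' hN' hN'κ => ?_⟩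
  obtain ⟨f, hfK, hfN', hfa⟩ := hA a haA ha N' hN' hN'κ
  obtain ⟨g, hgK, hgN', hgfa⟩ :=
    hM0' (f '' a) (Set.MapsTo.image_subset hfa) (mk_image_le.trans_lt ha) N' hN' hN'κ
  exact ⟨g * f, mul_mem hgK hfK, hfN'.mul hgN',
    fun x hx => hgfa (f x) (Set.mem_image_of_mem f hx)⟩

end AEC
end

section
/- The coheir relation satisfies continuity: if ⟨A_i, M0^i : i < kappa⟩ are increasing continuous filtrations of A and M0 respectively, and A_i ⫝_{M0^i} N for all i < kappa, then A ⫝_{M0} N. -/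
universe u

open Cardinal

/-! The coheir condition only ever looks at fewer than `κ` elements of `A` at a time, and when the
index order has cofinality at least `κ` such a set already lies in a single `A_i`; the type it needs
realized is then realized in `M0^i ⊆ M0`. -/

theorem Order.exists_forall_lt_of_mk_lt_cof {α : Type u} [LinearOrder α] {s : Set α}
    (hs : #s < Order.cof α) : ∃ x, ∀ y ∈ s, y < x :=
  not_isCofinal_iff.1 fun h => (Order.cof_le h).not_gt hs

theorem Set.exists_subset_of_mk_lt_cof {α β : Type u} [LinearOrder α] {A : α → Set β}
    (hA : Monotone A) {a : Set β} (ha : a ⊆ ⋃ i, A i) (hcard : #a < Order.cof α) :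
    ∃ j, a ⊆ A j := by
  choose g hg using fun x : a => Set.mem_iUnion.1 (ha x.2)
  obtain ⟨j, hj⟩ := Order.exists_forall_lt_of_mk_lt_cof (mk_range_le.trans_lt hcard)
  exact ⟨j, fun x hx => hA (hj _ ⟨⟨x, hx⟩, rfl⟩).le (hg ⟨x, hx⟩)⟩

namespace AEC

variable {C : Type u} (K : AEC C)

theorem nf_iUnion {α : Type u} [LinearOrder α] {κ : Cardinal.{u}} (hκ : κ ≤ Order.cof α)
    {N : Set C} {A M0 : α → Set C} (hA : Monotone A)
    (hM : ∀ i j, i ≤ j → K.prec (M0 i) (M0 j)) (hNF : ∀ i, K.NF κ (A i) (M0 i) N) :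
    K.NF κ (⋃ i, A i) (⋃ i, M0 i) N := by
  refine ⟨K.unionChain M0 hM N fun i => (hNF i).1, ?_⟩
  intro a ha hacard N' hN' hN'card
  obtain ⟨j, haj⟩ := Set.exists_subset_of_mk_lt_cof hA ha (hacard.trans_le hκ)
  obtain ⟨f, hf, hfix, hfa⟩ := (hNF j).2 a haj hacard N' hN' hN'card
  exact ⟨f, hf, hfix, fun x hx => Set.mem_iUnion_of_mem j (hfa x hx)⟩

theorem nf_continuity (κ : Cardinal.{u}) (hreg : κ.IsRegular)
    (N : Set C) (Ai M0i : κ.ord.ToType → Set C)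
    (hAmono : ∀ i j, i ≤ j → Ai i ⊆ Ai j)
    (hMmono : ∀ i j, i ≤ j → K.prec (M0i i) (M0i j))
    (hNF : ∀ i, K.NF κ (Ai i) (M0i i) N) :
    K.NF κ (⋃ i, Ai i) (⋃ i, M0i i) N :=
  K.nf_iUnion (by rw [Ordinal.cof_toType, hreg.cof_ord]) (fun i j => hAmono i j) hMmono hNF

end AEC
end
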